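/- Adopt the standing assumptions, let Δ be the associated graph, and suppose θ*_0 ≠ θ*_i for 1 ≤ i ≤ d. Then Δ is connected. -/

import Mathlib

/-!
Let `s` be the set of vertices reachable from `i` and `F = ∑_{k ∈ s} E_k`. Then `F` commutes
with `A` and `F A* (1 - F) = 0`, so `ker F` is invariant under `A` and `A*`; it contains `E_j V`
for every `j ∉ s` but not `E_i V`. So it suffices that a nonzero subspace `W` invariant under `A`
and `A*` is all of `V`. As `θ*_0` is a simple eigenvalue of `A*`, `E*_0` is a polynomial in `A*`,
hence `E*_0 W ⊆ W`, and tridiagonality yields `w ∈ W` with `v = E*_0 w ≠ 0`. Then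
`E*_m A^p v = 0` for `m > p` while `E*_p A^p v ≠ 0`, so `v, A v, …, A^d v` is a basis of `V`
lying in `W`.
-/

open Module Polynomial LinearMap

section Idempotents

variable {K R : Type*} [Field K] [Ring R] [Algebra K R] {ι : Type*} {e : ι → R}

lemma OrthogonalIdempotents.sum_mul_of_mem (he : OrthogonalIdempotents e) {i : ι}
    {s : Finset ι} (h : i ∈ s) : (∑ j ∈ s, e j) * e i = e i := by
  classical
  simp [Finset.sum_mul, he.mul_eq, h]

lemma OrthogonalIdempotents.sum_mul_of_notMem (he : OrthogonalIdempotents e) {i : ι}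
    {s : Finset ι} (h : i ∉ s) : (∑ j ∈ s, e j) * e i = 0 := by
  classical
  simp only [Finset.sum_mul, he.mul_eq]
  exact Finset.sum_eq_zero fun j hj => if_neg (by rintro rfl; exact h hj)

variable [Fintype ι]

lemma OrthogonalIdempotents.sum_smul_mul (he : OrthogonalIdempotents e) (θ : ι → K) (i : ι) :
    (∑ j, θ j • e j) * e i = θ i • e i := by
  classical
  simp [Finset.sum_mul, he.mul_eq]

lemma OrthogonalIdempotents.commute_sum_smul (he : OrthogonalIdempotents e) (θ : ι → K)
    (i : ι) : Commute (∑ j, θ j • e j) (e i) := by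
  classical
  rw [Commute, SemiconjBy, he.sum_smul_mul]
  simp [Finset.mul_sum, he.mul_eq]

lemma CompleteOrthogonalIdempotents.sum_smul_pow (he : CompleteOrthogonalIdempotents e)
    (θ : ι → K) (k : ℕ) : (∑ i, θ i • e i) ^ k = ∑ i, θ i ^ k • e i := by
  induction k with
  | zero => simp [he.complete]
  | succ k ih =>
    rw [pow_succ', ih, Finset.mul_sum]
    refine Finset.sum_congr rfl fun i _ => ?_
    rw [mul_smul_comm, he.sum_smul_mul, smul_smul, pow_succ]

lemma CompleteOrthogonalIdempotents.aeval_sum_smul (he : CompleteOrthogonalIdempotents e)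
    (θ : ι → K) (p : K[X]) : aeval (∑ i, θ i • e i) p = ∑ i, p.eval (θ i) • e i := by
  induction p using Polynomial.induction_on' with
  | add p q hp hq => simp only [map_add, hp, hq, eval_add, add_smul, Finset.sum_add_distrib]
  | monomial k a =>
    simp only [aeval_monomial, ← Algebra.smul_def, he.sum_smul_pow, Finset.smul_sum, smul_smul,
      eval_monomial]

lemma CompleteOrthogonalIdempotents.exists_aeval_sum_smul_eq
    (he : CompleteOrthogonalIdempotents e) {θ : ι → K} {k : ι} (hk : ∀ i ≠ k, θ k ≠ θ i) :
    ∃ p : K[X], aeval (∑ i, θ i • e i) p = e k := by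
  classical
  refine ⟨∏ l ∈ Finset.univ.erase k, Lagrange.basisDivisor (θ k) (θ l), ?_⟩
  rw [he.aeval_sum_smul, Finset.sum_eq_single k]
  · rw [eval_prod, Finset.prod_eq_one fun l hl =>
      Lagrange.eval_basisDivisor_left_of_ne (hk l (Finset.ne_of_mem_erase hl)), one_smul]
  · intro i _ hi
    rw [eval_prod, Finset.prod_eq_zero (Finset.mem_erase.2 ⟨hi, Finset.mem_univ i⟩)
      Lagrange.eval_basisDivisor_right, zero_smul]
  · simp

end Idempotents

section LinearAlgebra

variable {K V W : Type*} [Field K] [AddCommGroup V] [Module K V] [AddCommGroup W] [Module K W]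

lemma Module.End.invtSubmodule_le_invtSubmodule_aeval (f : Module.End K V) (p : K[X]) :
    f.invtSubmodule ≤ (aeval f p).invtSubmodule := by
  intro U hU
  induction p using Polynomial.induction_on' with
  | add p q hp hq => exact fun x hx => by simpa using U.add_mem (hp hx) (hq hx)
  | monomial k a =>
    intro x hx
    simpa [aeval_monomial, ← Algebra.smul_def, Module.End.coe_pow] using
      U.smul_mem a (((Module.End.mem_invtSubmodule_iff_mapsTo f).1 hU).iterate k hx)

lemma linearIndependent_of_apply_eq_zero_of_lt {n : ℕ} {f : Fin n → V}
    (P : Fin n → V →ₗ[K] W) (h0 : ∀ p m, p < m → P m (f p) = 0) (h1 : ∀ p, P p (f p) ≠ 0) :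
    LinearIndependent K f := by
  induction n with
  | zero => exact linearIndependent_empty_type
  | succ n ih =>
    rw [← Fin.snoc_init_self f, linearIndependent_finSnoc]
    refine ⟨ih (fun m => P m.castSucc) (fun p m h => h0 _ _ (by simpa using h)) (fun p => h1 _),
      fun hmem => h1 (Fin.last n) ?_⟩
    have hker : Submodule.span K (Set.range (Fin.init f)) ≤ ker (P (Fin.last n)) :=
      Submodule.span_le.2 <| by
        rintro _ ⟨p, rfl⟩
        exact h0 _ _ (Fin.castSucc_lt_last p)
    simpa using hker hmem

variable [FiniteDimensional K V]

lemma Module.End.apply_ne_zero_of_finrank_range_eq_one {T P : Module.End K V}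
    (hP : finrank K (range P) = 1) (hTP : T * P ≠ 0) {x : V} (hx : x ∈ range P) (hx0 : x ≠ 0) :
    T x ≠ 0 := by
  intro hTx
  have hspan : Submodule.span K {x} = range P :=
    Submodule.eq_of_le_of_finrank_le (Submodule.span_singleton_le_iff_mem _ _ |>.2 hx)
      (by rw [hP, finrank_span_singleton hx0])
  refine hTP (LinearMap.ext fun y => ?_)
  obtain ⟨c, hc⟩ := Submodule.mem_span_singleton.1 (hspan ▸ mem_range_self P y)
  simp [← hc, hTx]

lemma OrthogonalIdempotents.sum_eq_one_of_card_eq_finrank {ι : Type*} [Fintype ι]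
    {P : ι → Module.End K V} (hP : OrthogonalIdempotents P) (hne : ∀ i, P i ≠ 0)
    (hcard : Fintype.card ι = finrank K V) : ∑ i, P i = 1 := by
  classical
  choose y hy using fun i => (DFunLike.ne_iff.1 (hne i))
  have hPu : ∀ j i, P j (P i (y i)) = if j = i then P i (y i) else 0 := fun j i => by
    rw [← Module.End.mul_apply, hP.mul_eq]
    split_ifs <;> simp [*]
  have hli : LinearIndependent K fun i => P i (y i) := by
    rw [Fintype.linearIndependent_iff]
    intro c hc l
    have := congr(P l $hc)
    simp only [map_sum, map_smul, hPu, smul_ite, smul_zero, Finset.sum_ite_eq,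
      Finset.mem_univ, if_true, map_zero] at this
    exact (smul_eq_zero.1 this).resolve_right (hy l)
  refine LinearMap.ext_on_range (hli.span_eq_top_of_card_eq_finrank' hcard) fun i => ?_
  simp [LinearMap.sum_apply, hPu]

end LinearAlgebra

section Tridiagonal

variable {K V : Type*} [Field K] [AddCommGroup V] [Module K V]

def IsTridiagonal {n : ℕ} (Estar : Fin n → Module.End K V) (A : Module.End K V) : Prop :=
  ∀ i j : Fin n, 1 < Nat.dist (i : ℕ) (j : ℕ) → Estar i * A * Estar j = 0

namespace IsTridiagonal

variable {n : ℕ} {Estar : Fin n → Module.End K V} {A : Module.End K V}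

lemma apply_eq (hA : IsTridiagonal Estar A) (hsum : ∑ i, Estar i = 1) {m k : Fin n} {x : V}
    (hx : ∀ l : Fin n, l ≠ k → Nat.dist (m : ℕ) (l : ℕ) ≤ 1 → Estar l x = 0) :
    Estar m (A x) = (Estar m * A * Estar k) x := by
  conv_lhs => rw [← Module.End.one_apply (R := K) x, ← hsum, LinearMap.sum_apply, map_sum, map_sum]
  refine Finset.sum_eq_single k (fun l _ hl => ?_) (by simp)
  rcases le_or_gt (Nat.dist (m : ℕ) (l : ℕ)) 1 with h | h
  · simp [hx l hl h]
  · exact congr($(hA m l h) x)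

lemma apply_eq_zero (hA : IsTridiagonal Estar A) (hsum : ∑ i, Estar i = 1) {m : Fin n} {x : V}
    (hx : ∀ l : Fin n, Nat.dist (m : ℕ) (l : ℕ) ≤ 1 → Estar l x = 0) : Estar m (A x) = 0 := by
  rw [hA.apply_eq (k := m) hsum fun l _ => hx l, Module.End.mul_apply, hx m (by simp)]
  simp

variable {Estar : Fin (n + 1) → Module.End K V}

lemma apply_pow_eq_zero (hA : IsTridiagonal Estar A) (hsum : ∑ i, Estar i = 1) {v : V}
    (hv : ∀ l ≠ 0, Estar l v = 0) (p : ℕ) {m : Fin (n + 1)} (hpm : p < m) :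
    Estar m ((A ^ p) v) = 0 := by
  induction p generalizing m with
  | zero => exact hv m (Fin.pos_iff_ne_zero.1 hpm)
  | succ p ih =>
    rw [pow_succ', Module.End.mul_apply]
    exact hA.apply_eq_zero hsum fun l hl => ih (by simp only [Nat.dist] at hl; omega)

variable [FiniteDimensional K V]
  (hrank : ∀ i, finrank K (range (Estar i)) = 1)
  (hirr : ∀ i j : Fin (n + 1), Nat.dist (i : ℕ) (j : ℕ) = 1 → Estar i * A * Estar j ≠ 0)
include hrank hirr

lemma apply_pow_ne_zero (hA : IsTridiagonal Estar A) (hsum : ∑ i, Estar i = 1) {v : V}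
    (hv : ∀ l ≠ 0, Estar l v = 0) (hv0 : Estar 0 v ≠ 0) (p : Fin (n + 1)) :
    Estar p ((A ^ (p : ℕ)) v) ≠ 0 := by
  induction p using Fin.induction with
  | zero => simpa using hv0
  | succ p ih =>
    rw [Fin.val_succ, pow_succ', Module.End.mul_apply, hA.apply_eq (k := p.castSucc) hsum
      fun l hl hdist => hA.apply_pow_eq_zero hsum hv _ ?_, Module.End.mul_apply]
    · exact Module.End.apply_ne_zero_of_finrank_range_eq_one (hrank _)
        (hirr _ _ (by simp [Nat.dist])) (mem_range_self _ _) ih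
    · have : (l : ℕ) ≠ p := fun h => hl (Fin.ext h)
      simp only [Nat.dist, Fin.val_succ] at hdist
      omega

lemma span_pow_apply_eq_top (hA : IsTridiagonal Estar A) (hsum : ∑ i, Estar i = 1)
    (hdim : finrank K V = n + 1) {v : V} (hv : ∀ l ≠ 0, Estar l v = 0) (hv0 : Estar 0 v ≠ 0) :
    Submodule.span K (Set.range fun p : Fin (n + 1) => (A ^ (p : ℕ)) v) = ⊤ :=
  (linearIndependent_of_apply_eq_zero_of_lt Estar (fun _ _ => hA.apply_pow_eq_zero hsum hv _)
    (hA.apply_pow_ne_zero hrank hirr hsum hv hv0)).span_eq_top_of_card_eq_finrank' (by simp [hdim])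

/-- Descent: if `W` meets the image of `E*_k` with `k > 0` but no earlier one, then applying `A`
to a witness reaches the image of `E*_{k-1}`. -/
lemma exists_mem_apply_ne_zero (hA : IsTridiagonal Estar A) (hsum : ∑ i, Estar i = 1)
    {W : Submodule K V} (hW : W ≠ ⊥) (hWA : W ∈ A.invtSubmodule) :
    ∃ w ∈ W, Estar 0 w ≠ 0 := by
  obtain ⟨w, hw, hw0⟩ := W.exists_mem_ne_zero_of_ne_bot hW
  obtain ⟨k, hk⟩ : ∃ k, Estar k w ≠ 0 := by
    by_contra! h
    exact hw0 (by simpa [h] using congr($hsum.symm w))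
  clear hw0
  induction k using WellFoundedLT.induction generalizing w with
  | ind k ih =>
    by_cases hk0 : k = 0
    · exact ⟨w, hw, hk0 ▸ hk⟩
    by_cases hbelow : ∃ l < k, Estar l w ≠ 0
    · obtain ⟨l, hlk, hl⟩ := hbelow
      exact ih l hlk w hw hl
    push Not at hbelow
    have hk_pos : 0 < (k : ℕ) := Nat.pos_of_ne_zero fun h => hk0 (Fin.ext h)
    refine ih ⟨k - 1, by omega⟩ (Fin.lt_def.2 (by simp only; omega)) (A w) (hWA hw) ?_
    rw [hA.apply_eq (k := k) hsum fun l hl hdist => hbelow l ?_, Module.End.mul_apply]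
    · exact Module.End.apply_ne_zero_of_finrank_range_eq_one (hrank _)
        (hirr _ _ (by simp only [Nat.dist]; omega)) (mem_range_self _ _) hk
    · have : (l : ℕ) ≠ k := fun h => hl (Fin.ext h)
      simp only [Nat.dist] at hdist
      exact Fin.lt_def.2 (by omega)

lemma eq_top_of_mem_invtSubmodule (hA : IsTridiagonal Estar A)
    (hEstar : CompleteOrthogonalIdempotents Estar) (hdim : finrank K V = n + 1)
    {W : Submodule K V} (hW : W ≠ ⊥) (hWA : W ∈ A.invtSubmodule)
    (hW0 : W ∈ (Estar 0).invtSubmodule) : W = ⊤ := by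
  obtain ⟨w, hw, hw0⟩ := hA.exists_mem_apply_ne_zero hrank hirr hEstar.complete hW hWA
  have hv : ∀ l ≠ 0, Estar l (Estar 0 w) = 0 := fun l hl => by
    rw [← Module.End.mul_apply, hEstar.ortho hl, LinearMap.zero_apply]
  have hv0 : Estar 0 (Estar 0 w) ≠ 0 := by rwa [← Module.End.mul_apply, (hEstar.idem 0).eq]
  rw [eq_top_iff, ← hA.span_pow_apply_eq_top hrank hirr hEstar.complete hdim hv hv0,
    Submodule.span_le]
  rintro _ ⟨p, rfl⟩
  simpa [Module.End.coe_pow] using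
    ((Module.End.mem_invtSubmodule_iff_mapsTo A).1 hWA).iterate p (hW0 hw)

end IsTridiagonal

end Tridiagonal

/-- Every `w` in the kernel of `∑_{k ∈ s} E_k` equals `∑_{l ∉ s} E_l w`. -/
lemma CompleteOrthogonalIdempotents.ker_sum_mem_invtSubmodule {K V ι : Type*} [Field K]
    [AddCommGroup V] [Module K V] [Fintype ι] {E : ι → Module.End K V}
    (hE : CompleteOrthogonalIdempotents E) {s : Finset ι} {T : Module.End K V}
    (hT : ∀ k ∈ s, ∀ l ∉ s, E k * T * E l = 0) : ker (∑ k ∈ s, E k) ∈ T.invtSubmodule := by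
  classical
  intro w hw
  rw [mem_ker] at hw
  rw [Submodule.mem_comap, mem_ker]
  have hw' : (∑ l ∈ sᶜ, E l) w = w := by
    simpa [hw, hE.complete] using congr($(Finset.sum_add_sum_compl s E) w)
  have hcut : (∑ k ∈ s, E k) * T * ∑ l ∈ sᶜ, E l = 0 := by
    simp only [Finset.sum_mul, Finset.mul_sum]
    exact Finset.sum_eq_zero fun l hl =>
      Finset.sum_eq_zero fun k hk => hT k hk l (Finset.mem_compl.1 hl)
  rw [← hw']
  exact congr($hcut w)

lemma CompleteOrthogonalIdempotents.reflTransGen_of_irreducible {K V ι : Type*} [Field K]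
    [AddCommGroup V] [Module K V] [Fintype ι] {E : ι → Module.End K V}
    (hE : CompleteOrthogonalIdempotents E) (hEne : ∀ i, E i ≠ 0) {A Astar : Module.End K V}
    (hAE : ∀ i, Commute A (E i))
    (hirred : ∀ W : Submodule K V, W ≠ ⊥ → W ∈ A.invtSubmodule → W ∈ Astar.invtSubmodule →
      W = ⊤)
    (i j : ι) : Relation.ReflTransGen (fun a b => a ≠ b ∧ E a * Astar * E b ≠ 0) i j := by
  classical
  by_contra hij
  set s := Finset.univ.filter
    (Relation.ReflTransGen (fun a b => a ≠ b ∧ E a * Astar * E b ≠ 0) i)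
  have hi : i ∈ s := by simp [s, Relation.ReflTransGen.refl]
  have hj : j ∉ s := by simpa [s] using hij
  have hAstar : ∀ k ∈ s, ∀ l ∉ s, E k * Astar * E l = 0 := by
    intro k hk l hl
    by_contra h
    simp only [s, Finset.mem_filter, Finset.mem_univ, true_and] at hk hl
    exact hl (hk.tail ⟨fun hkl => hl (hkl ▸ hk), h⟩)
  have hA : ∀ k ∈ s, ∀ l ∉ s, E k * A * E l = 0 := fun k hk l hl => by
    rw [← (hAE k).eq, mul_assoc, hE.ortho (show k ≠ l by rintro rfl; exact hl hk), mul_zero]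
  obtain ⟨x, hx⟩ := DFunLike.ne_iff.1 (hEne j)
  obtain ⟨y, hy⟩ := DFunLike.ne_iff.1 (hEne i)
  have hbot : ker (∑ k ∈ s, E k) ≠ ⊥ := fun h => hx <| by
    have hxker : E j x ∈ ker (∑ k ∈ s, E k) := by
      rw [mem_ker, ← Module.End.mul_apply, hE.sum_mul_of_notMem hj, LinearMap.zero_apply]
    simpa [h] using hxker
  have hyker : E i y ∈ ker (∑ k ∈ s, E k) := by
    rw [hirred _ hbot (hE.ker_sum_mem_invtSubmodule hA) (hE.ker_sum_mem_invtSubmodule hAstar)]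
    exact Submodule.mem_top
  rw [mem_ker, ← Module.End.mul_apply, hE.sum_mul_of_mem hi] at hyker
  exact hy hyker

theorem stmt_19_general {K : Type*} [Field K] {d : ℕ}
    {V : Type*} [AddCommGroup V] [Module K V] [FiniteDimensional K V]
    (hdim : Module.finrank K V = d + 1)
    (Estar : Fin (d + 1) → Module.End K V)
    (hEstar : ∀ i j, Estar i * Estar j = if i = j then Estar i else 0)
    (hEstarRank : ∀ i, Module.finrank K (LinearMap.range (Estar i)) = 1)
    (A : Module.End K V)
    (htri : ∀ i j : Fin (d + 1), 1 < Nat.dist (i : ℕ) (j : ℕ) → Estar i * A * Estar j = 0)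
    (hirr : ∀ i j : Fin (d + 1), Nat.dist (i : ℕ) (j : ℕ) = 1 → Estar i * A * Estar j ≠ 0)
    (θ : Fin (d + 1) → K)
    (E : Fin (d + 1) → Module.End K V)
    (hE : ∀ i j, E i * E j = if i = j then E i else 0)
    (hEne : ∀ i, E i ≠ 0)
    (hEsum : ∑ i, E i = 1)
    (hA : A = ∑ i, θ i • E i)
    (θstar : Fin (d + 1) → K)
    (Astar : Module.End K V) (hAstar : Astar = ∑ i, θstar i • Estar i)
    (hθ0 : ∀ i : Fin (d + 1), i ≠ 0 → θstar 0 ≠ θstar i) :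
    ∀ i j : Fin (d + 1),
      Relation.ReflTransGen (fun a b => a ≠ b ∧ E a * Astar * E b ≠ 0) i j := by
  have hEstar' := OrthogonalIdempotents.iff_mul_eq.2 hEstar
  have hEstarC : CompleteOrthogonalIdempotents Estar :=
    ⟨hEstar', hEstar'.sum_eq_one_of_card_eq_finrank
      (fun i h => zero_ne_one (by rw [← hEstarRank i, h, LinearMap.range_zero, finrank_bot]))
      (by simp [hdim])⟩
  have hEC : CompleteOrthogonalIdempotents E := ⟨OrthogonalIdempotents.iff_mul_eq.2 hE, hEsum⟩
  have htri' : IsTridiagonal Estar A := htri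
  obtain ⟨p, hp⟩ := hEstarC.exists_aeval_sum_smul_eq hθ0
  subst hAstar
  refine hEC.reflTransGen_of_irreducible hEne (hA ▸ hEC.commute_sum_smul θ) fun W hW hWA hWAstar =>
    htri'.eq_top_of_mem_invtSubmodule hEstarRank hirr hEstarC hdim hW hWA ?_
  rw [← hp]
  exact Module.End.invtSubmodule_le_invtSubmodule_aeval _ p hWAstar

/-- With the standing assumptions, suppose `θ*_0 ≠ θ*_i` for `1 ≤ i ≤ d`. Then the
graph `Δ` is connected: any two vertices are joined by a path, where distinct vertices
`a, b` are adjacent whenever `E_a A* E_b ≠ 0`. -/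
theorem stmt_19 {K : Type*} [Field K] {d : ℕ} (hd : 1 ≤ d)
    {V : Type*} [AddCommGroup V] [Module K V] [FiniteDimensional K V]
    (hdim : Module.finrank K V = d + 1)
    (Estar : Fin (d + 1) → Module.End K V)
    (hEstar : ∀ i j, Estar i * Estar j = if i = j then Estar i else 0)
    (hEstarRank : ∀ i, Module.finrank K (LinearMap.range (Estar i)) = 1)
    (A : Module.End K V)
    (htri : ∀ i j : Fin (d + 1), 1 < Nat.dist (i : ℕ) (j : ℕ) → Estar i * A * Estar j = 0)
    (hirr : ∀ i j : Fin (d + 1), Nat.dist (i : ℕ) (j : ℕ) = 1 → Estar i * A * Estar j ≠ 0)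
    (θ : Fin (d + 1) → K) (hθ : Function.Injective θ)
    (E : Fin (d + 1) → Module.End K V)
    (hE : ∀ i j, E i * E j = if i = j then E i else 0)
    (hEne : ∀ i, E i ≠ 0)
    (hEsum : ∑ i, E i = 1)
    (hA : A = ∑ i, θ i • E i)
    (θstar : Fin (d + 1) → K)
    (Astar : Module.End K V) (hAstar : Astar = ∑ i, θstar i • Estar i)
    (hθ0 : ∀ i : Fin (d + 1), i ≠ 0 → θstar 0 ≠ θstar i) :
    ∀ i j : Fin (d + 1),
      Relation.ReflTransGen (fun a b => a ≠ b ∧ E a * Astar * E b ≠ 0) i j :=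
  stmt_19_general hdim Estar hEstar hEstarRank A htri hirr θ E hE hEne hEsum hA θstar Astar hAstar
    hθ0
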